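/- Under the same hypotheses (ψ : G₁ → G₂ a Lie quasi-bialgebra morphism), for all n ∈ ℕ, u ∈ g₁ and ξ, η ∈ g₂*: (i) p_{g₁*}(ad¹_{ψ*ξ})ⁿ ψ*η = ψ* p_{g₂*}(ad²_ξ)ⁿ η; (ii) p_{g₁*}(ad¹_{ψ*ξ})ⁿ u = ψ* p_{g₂*}(ad²_ξ)ⁿ ψu; (iii) ψ p_{g₁}(ad¹_{ψ*ξ})ⁿ ψ*η = p_{g₂}(ad²_ξ)ⁿ η. -/
import Mathlib


section

/-- The bracket of the canonical double `d = g ⊕ g*` of a Lie quasi-bialgebra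
`(g, [,], ϖ, φ)`, where `c ξ η = ⟨ξ⊗η⊗1, φ⟩` is the contraction of the associator:
`[x,y]_d = [x,y]`, `[x,ξ]_d = ϖ_x ξ − ad*_x ξ`,
`[ξ,η]_d = ⟨ξ⊗η⊗1, φ⟩ + ⟨η, ϖ_• ξ⟩`. -/
def brD {K L : Type*} [Field K] [LieRing L] [LieAlgebra K L]
    (ϖ : L →ₗ[K] Module.Dual K L →ₗ[K] L)
    (c : Module.Dual K L →ₗ[K] Module.Dual K L →ₗ[K] L) :
    L × Module.Dual K L → L × Module.Dual K L → L × Module.Dual K L :=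
  fun X Y =>
    (⁅X.1, Y.1⁆ + ϖ X.1 Y.2 - ϖ Y.1 X.2 + c X.2 Y.2,
      - Y.2 ∘ₗ LieAlgebra.ad K L X.1 + X.2 ∘ₗ LieAlgebra.ad K L Y.1
        + Y.2 ∘ₗ ϖ.flip X.2)

variable {K L M : Type*} [Field K] [LieRing L] [LieAlgebra K L]
  [LieRing M] [LieAlgebra K M]

/-- If `ψ : G₁ → G₂` is a morphism of Lie quasi-bialgebras, then
`ψ ∘ p_{g₁} ∘ (ad¹_{ψ*ξ})ⁿ ∘ i_{g₁} = p_{g₂} ∘ (ad²_ξ)ⁿ ∘ i_{g₂} ∘ ψ`. -/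
theorem stmt_12
    (ϖ₁ : L →ₗ[K] Module.Dual K L →ₗ[K] L)
    (c₁ : Module.Dual K L →ₗ[K] Module.Dual K L →ₗ[K] L)
    (ϖ₂ : M →ₗ[K] Module.Dual K M →ₗ[K] M)
    (c₂ : Module.Dual K M →ₗ[K] Module.Dual K M →ₗ[K] M)
    -- `G₁` and `G₂` are Lie quasi-bialgebras: the double brackets are Lie brackets
    (h1anti : ∀ X Y, brD ϖ₁ c₁ X Y = - brD ϖ₁ c₁ Y X)
    (h1jac : ∀ X Y Z, brD ϖ₁ c₁ X (brD ϖ₁ c₁ Y Z)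
      = brD ϖ₁ c₁ (brD ϖ₁ c₁ X Y) Z + brD ϖ₁ c₁ Y (brD ϖ₁ c₁ X Z))
    (h2anti : ∀ X Y, brD ϖ₂ c₂ X Y = - brD ϖ₂ c₂ Y X)
    (h2jac : ∀ X Y Z, brD ϖ₂ c₂ X (brD ϖ₂ c₂ Y Z)
      = brD ϖ₂ c₂ (brD ϖ₂ c₂ X Y) Z + brD ϖ₂ c₂ Y (brD ϖ₂ c₂ X Z))
    -- `ψ` is a Lie quasi-bialgebra morphism
    (ψ : L →ₗ⁅K⁆ M)
    (hϖψ : ∀ (x : L) (ξ : Module.Dual K M),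
      ψ (ϖ₁ x (ψ.toLinearMap.dualMap ξ)) = ϖ₂ (ψ x) ξ)
    (hcψ : ∀ ξ η : Module.Dual K M,
      ψ (c₁ (ψ.toLinearMap.dualMap ξ) (ψ.toLinearMap.dualMap η)) = c₂ ξ η) :
    ∀ (n : ℕ) (u : L) (ξ η : Module.Dual K M),
      -- (i)  p_{g₁*}(ad¹_{ψ*ξ})ⁿ ψ*η = ψ* p_{g₂*}(ad²_ξ)ⁿ η
      (((fun Y => brD ϖ₁ c₁ (0, ψ.toLinearMap.dualMap ξ) Y)^[n]
          (0, ψ.toLinearMap.dualMap η)).2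
        = ψ.toLinearMap.dualMap (((fun Y => brD ϖ₂ c₂ (0, ξ) Y)^[n] (0, η)).2))
      ∧
      -- (ii) p_{g₁*}(ad¹_{ψ*ξ})ⁿ u = ψ* p_{g₂*}(ad²_ξ)ⁿ ψu
      (((fun Y => brD ϖ₁ c₁ (0, ψ.toLinearMap.dualMap ξ) Y)^[n] (u, 0)).2
        = ψ.toLinearMap.dualMap (((fun Y => brD ϖ₂ c₂ (0, ξ) Y)^[n] (ψ u, 0)).2))
      ∧
      -- (iii) ψ p_{g₁}(ad¹_{ψ*ξ})ⁿ ψ*η = p_{g₂}(ad²_ξ)ⁿ η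
      (ψ (((fun Y => brD ϖ₁ c₁ (0, ψ.toLinearMap.dualMap ξ) Y)^[n]
            (0, ψ.toLinearMap.dualMap η)).1)
        = ((fun Y => brD ϖ₂ c₂ (0, ξ) Y)^[n] (0, η)).1) := by
  intro n u ξ η
  have step : ∀ (a : L) (α : Module.Dual K L) (b : M) (β : Module.Dual K M),
      ψ a = b → α = ψ.toLinearMap.dualMap β →
      ψ ((brD ϖ₁ c₁ (0, ψ.toLinearMap.dualMap ξ) (a, α)).1)
          = (brD ϖ₂ c₂ (0, ξ) (b, β)).1 ∧
        (brD ϖ₁ c₁ (0, ψ.toLinearMap.dualMap ξ) (a, α)).2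
          = ψ.toLinearMap.dualMap ((brD ϖ₂ c₂ (0, ξ) (b, β)).2) := by
    rintro a α b β rfl rfl
    constructor
    · simp [brD, map_sub, map_add, hϖψ, hcψ]
    · ext x
      simp [brD, LinearMap.dualMap_apply, LieAlgebra.ad_apply,
        LinearMap.flip_apply, hϖψ, LieHom.map_lie]
  have key : ∀ (m : ℕ) (a : L) (α : Module.Dual K L) (b : M)
      (β : Module.Dual K M), ψ a = b → α = ψ.toLinearMap.dualMap β →
      ψ (((fun Y => brD ϖ₁ c₁ (0, ψ.toLinearMap.dualMap ξ) Y)^[m] (a, α)).1)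
          = ((fun Y => brD ϖ₂ c₂ (0, ξ) Y)^[m] (b, β)).1 ∧
        ((fun Y => brD ϖ₁ c₁ (0, ψ.toLinearMap.dualMap ξ) Y)^[m] (a, α)).2
          = ψ.toLinearMap.dualMap
              (((fun Y => brD ϖ₂ c₂ (0, ξ) Y)^[m] (b, β)).2) := by
    intro m
    induction m with
    | zero => exact fun a α b β h1 h2 => ⟨h1, h2⟩
    | succ m ih =>
      intro a α b β h1 h2
      obtain ⟨ih1, ih2⟩ := ih a α b β h1 h2
      simp only [Function.iterate_succ_apply']
      exact step _ _ _ _ ih1 ih2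
  refine ⟨(key n 0 (ψ.toLinearMap.dualMap η) 0 η ψ.map_zero rfl).2,
    (key n u 0 (ψ u) 0 rfl (by simp)).2,
    (key n 0 (ψ.toLinearMap.dualMap η) 0 η ψ.map_zero rfl).1⟩

end
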